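/- Let λ, ρ be degree distributions, y(x) = 1−ρ(1−x), ε(x) = x/λ(y(x)), h^{EBP}(x) = Λ(y(x)). Then along the EBP curve, for any 0 < a ≤ b ≤ 1, ∫_a^b h^{EBP}(x) ε'(x) dx = P_{ε(b)}(b, y(b)) − P_{ε(a)}(a, y(a)), where P_ε is the trial entropy. Equivalently, d/dx [P_{ε(x)}(x, y(x))] = Λ(y(x)) · ε'(x). -/

import Mathlib

open Polynomial

/-- `Λ'(1) = 1/∫₀¹λ`. -/
noncomputable def meanInv (lam : Polynomial ℝ) : ℝ := 1 / ∫ t in (0:ℝ)..1, lam.eval t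

/-- `Λ(u) = Λ'(1)·∫₀ᵘ λ`. -/
noncomputable def nodeDist (lam : Polynomial ℝ) (u : ℝ) : ℝ :=
  meanInv lam * ∫ t in (0:ℝ)..u, lam.eval t

/-- Trial entropy `P_ε(x,y)`. -/
noncomputable def trialEntropy (lam rho : Polynomial ℝ) (ε x y : ℝ) : ℝ :=
  meanInv lam * x * (1 - y) - (meanInv lam / meanInv rho) * (1 - nodeDist rho (1 - x)) +
    ε * nodeDist lam y

/-- `y(x) = 1 − ρ(1−x)`. -/
noncomputable def Yfun (rho : Polynomial ℝ) (x : ℝ) : ℝ := 1 - rho.eval (1 - x)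

/-- `ε(x) = x / λ(y(x))`. -/
noncomputable def epsFun (lam rho : Polynomial ℝ) (x : ℝ) : ℝ :=
  x / lam.eval (Yfun rho x)

/-! At a point of the EBP curve, `(x, y(x))` is a stationary point of `P_{ε(x)}` in `(x, y)`:
`∂ₓP = Λ'(1)·(1 - y - ρ(1 - x))` vanishes since `y = 1 - ρ(1 - x)`, and
`∂_yP = Λ'(1)·(ε·λ(y) - x)` vanishes since `ε = x / λ(y)`. By the chain rule only the explicit
dependence on `ε` survives, giving the derivative `Λ(y(x))·ε'(x)`; the integral form is the
fundamental theorem of calculus. Nonnegative coefficients make `λ(y(x)) > 0` on `(0, 1]`, so `ε`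
is smooth there. -/

open Set

namespace Polynomial

theorem eval_lt_eval_of_coeff_nonneg {p : ℝ[X]} (hc : ∀ k, 0 ≤ p.coeff k)
    (hd : 0 < p.natDegree) {s t : ℝ} (hs : 0 ≤ s) (hst : s < t) : p.eval s < p.eval t := by
  have hlead : 0 < p.leadingCoeff :=
    (hc _).lt_of_ne' (leadingCoeff_ne_zero.mpr (ne_zero_of_natDegree_gt hd))
  rw [eval_eq_sum_range, eval_eq_sum_range]
  refine Finset.sum_lt_sum (fun i _ => ?_) ⟨p.natDegree, Finset.self_mem_range_succ _, ?_⟩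
  · exact mul_le_mul_of_nonneg_left (pow_le_pow_left₀ hs hst.le i) (hc i)
  · exact mul_lt_mul_of_pos_left (pow_lt_pow_left₀ hst hs hd.ne') hlead

theorem eval_pos_of_coeff_nonneg {p : ℝ[X]} (hc : ∀ k, 0 ≤ p.coeff k)
    (hd : 0 < p.natDegree) {t : ℝ} (ht : 0 < t) : 0 < p.eval t :=
  (coeff_zero_eq_eval_zero p ▸ hc 0).trans_lt (eval_lt_eval_of_coeff_nonneg hc hd le_rfl ht)

theorem contDiff_eval (p : ℝ[X]) (n : WithTop ℕ∞) : ContDiff ℝ n fun x => p.eval x := by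
  simpa using p.contDiff_aeval (𝕜 := ℝ) n

end Polynomial

theorem meanInv_ne_zero {p : ℝ[X]} (hc : ∀ k, 0 ≤ p.coeff k) (hd : 0 < p.natDegree) :
    meanInv p ≠ 0 :=
  one_div_ne_zero <| ne_of_gt <| intervalIntegral.intervalIntegral_pos_of_pos_on
    (p.continuous.intervalIntegrable _ _) (fun _ ht => eval_pos_of_coeff_nonneg hc hd ht.1) one_pos

theorem hasDerivAt_nodeDist (p : ℝ[X]) (u : ℝ) :
    HasDerivAt (nodeDist p) (meanInv p * p.eval u) u :=
  (intervalIntegral.integral_hasDerivAt_right (p.continuous.intervalIntegrable _ _)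
    (p.continuous.stronglyMeasurableAtFilter _ _) p.continuous.continuousAt).const_mul _

theorem continuous_nodeDist (p : ℝ[X]) : Continuous (nodeDist p) :=
  continuous_iff_continuousAt.mpr fun u => (hasDerivAt_nodeDist p u).continuousAt

theorem contDiff_Yfun (rho : ℝ[X]) (n : WithTop ℕ∞) : ContDiff ℝ n (Yfun rho) :=
  contDiff_const.sub ((rho.contDiff_eval n).comp (contDiff_const.sub contDiff_id))

theorem eval_Yfun_pos {lam rho : ℝ[X]} (hlc : ∀ k, 0 ≤ lam.coeff k) (hld : 0 < lam.natDegree)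
    (hrc : ∀ k, 0 ≤ rho.coeff k) (hr1 : rho.eval 1 = 1) (hrd : 0 < rho.natDegree)
    {x : ℝ} (hx : x ∈ Ioc 0 1) : 0 < lam.eval (Yfun rho x) := by
  have : rho.eval (1 - x) < rho.eval 1 :=
    eval_lt_eval_of_coeff_nonneg hrc hrd (by linarith [hx.2]) (by linarith [hx.1])
  exact eval_pos_of_coeff_nonneg hlc hld (by rw [Yfun]; linarith)

theorem contDiffOn_epsFun (lam rho : ℝ[X]) (n : WithTop ℕ∞) :
    ContDiffOn ℝ n (epsFun lam rho) {x | lam.eval (Yfun rho x) ≠ 0} :=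
  contDiffOn_id.div ((lam.contDiff_eval n).comp (contDiff_Yfun rho n)).contDiffOn fun _ hx => hx

theorem isOpen_setOf_eval_Yfun_ne_zero (lam rho : ℝ[X]) :
    IsOpen {x | lam.eval (Yfun rho x) ≠ 0} :=
  isOpen_ne_fun (lam.continuous.comp (contDiff_Yfun rho 0).continuous) continuous_const

theorem HasDerivAt.trialEntropy {lam rho : ℝ[X]} (hr : meanInv rho ≠ 0) {e X Y : ℝ → ℝ}
    {e' X' Y' t : ℝ} (he : HasDerivAt e e' t) (hX : HasDerivAt X X' t) (hY : HasDerivAt Y Y' t) :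
    HasDerivAt (fun s => trialEntropy lam rho (e s) (X s) (Y s))
      (nodeDist lam (Y t) * e' + meanInv lam * (1 - Y t - rho.eval (1 - X t)) * X' +
        meanInv lam * (e t * lam.eval (Y t) - X t) * Y') t := by
  have hΓ := (hasDerivAt_nodeDist rho (1 - X t)).comp t (hX.const_sub 1)
  have hΛ := (hasDerivAt_nodeDist lam (Y t)).comp t hY
  refine (((hX.const_mul (meanInv lam)).mul (hY.const_sub 1)).sub
    ((hΓ.const_sub 1).const_mul (meanInv lam / meanInv rho)) |>.add (he.mul hΛ)).congr_deriv ?_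
  simp only [Function.comp_apply]
  field_simp
  ring

theorem hasDerivAt_trialEntropy_ebp {lam rho : ℝ[X]} (hr : meanInv rho ≠ 0) {x : ℝ}
    (hx : lam.eval (Yfun rho x) ≠ 0) :
    HasDerivAt (fun t => trialEntropy lam rho (epsFun lam rho t) t (Yfun rho t))
      (nodeDist lam (Yfun rho x) * deriv (epsFun lam rho) x) x := by
  have hε : DifferentiableAt ℝ (epsFun lam rho) x :=
    ((contDiffOn_epsFun lam rho 1).contDiffAt
      ((isOpen_setOf_eval_Yfun_ne_zero lam rho).mem_nhds hx)).differentiableAt one_ne_zero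
  have hy : HasDerivAt (Yfun rho) (deriv (Yfun rho) x) x :=
    ((contDiff_Yfun rho 1).differentiable one_ne_zero x).hasDerivAt
  have hxfix : 1 - Yfun rho x - rho.eval (1 - x) = 0 := by rw [Yfun]; ring
  have hyfix : epsFun lam rho x * lam.eval (Yfun rho x) - x = 0 := by
    rw [epsFun, div_mul_cancel₀ _ hx, sub_self]
  simpa [hxfix, hyfix] using hε.hasDerivAt.trialEntropy (lam := lam) hr (hasDerivAt_id x) hy

theorem ebp_trial_entropy_integral_general (lam rho : Polynomial ℝ)
    (hlc : ∀ k, 0 ≤ lam.coeff k) (hrc : ∀ k, 0 ≤ rho.coeff k)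
    (hr1 : rho.eval 1 = 1)
    (hld : 1 ≤ lam.natDegree) (hrd : 1 ≤ rho.natDegree) :
    (∀ a b : ℝ, 0 < a → a ≤ b → b ≤ 1 →
      (∫ x in a..b, nodeDist lam (Yfun rho x) * deriv (epsFun lam rho) x) =
        trialEntropy lam rho (epsFun lam rho b) b (Yfun rho b) -
          trialEntropy lam rho (epsFun lam rho a) a (Yfun rho a)) ∧
    (∀ x ∈ Set.Ioc (0:ℝ) 1,
      HasDerivAt (fun t => trialEntropy lam rho (epsFun lam rho t) t (Yfun rho t))
        (nodeDist lam (Yfun rho x) * deriv (epsFun lam rho) x) x) := by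
  have hne : ∀ x ∈ Ioc (0:ℝ) 1, lam.eval (Yfun rho x) ≠ 0 :=
    fun x hx => (eval_Yfun_pos hlc hld hrc hr1 hrd hx).ne'
  have hderiv : ∀ x ∈ Ioc (0:ℝ) 1, HasDerivAt
      (fun t => trialEntropy lam rho (epsFun lam rho t) t (Yfun rho t))
      (nodeDist lam (Yfun rho x) * deriv (epsFun lam rho) x) x :=
    fun x hx => hasDerivAt_trialEntropy_ebp (meanInv_ne_zero hrc hrd) (hne x hx)
  refine ⟨fun a b ha hab hb => ?_, hderiv⟩
  have hsub : uIcc a b ⊆ Ioc 0 1 := by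
    rw [uIcc_of_le hab]
    exact fun x hx => ⟨ha.trans_le hx.1, hx.2.trans hb⟩
  have hcont : ContinuousOn (deriv (epsFun lam rho)) (uIcc a b) :=
    ((contDiffOn_epsFun lam rho 1).continuousOn_deriv_of_isOpen
      (isOpen_setOf_eval_Yfun_ne_zero lam rho) le_rfl).mono fun x hx => hne x (hsub hx)
  exact intervalIntegral.integral_eq_sub_of_hasDerivAt (fun x hx => hderiv x (hsub hx))
    ((((continuous_nodeDist lam).comp (contDiff_Yfun rho 0).continuous).continuousOn.mul
      hcont).intervalIntegrable)

/-- Along the EBP curve, `∫_a^b h^{EBP}(x) ε'(x) dx = P_{ε(b)}(b,y(b)) − P_{ε(a)}(a,y(a))`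
for `0 < a ≤ b ≤ 1`; equivalently `d/dx P_{ε(x)}(x,y(x)) = Λ(y(x))·ε'(x)`. -/
theorem ebp_trial_entropy_integral (lam rho : Polynomial ℝ)
    (hlc : ∀ k, 0 ≤ lam.coeff k) (hrc : ∀ k, 0 ≤ rho.coeff k)
    (hl1 : lam.eval 1 = 1) (hr1 : rho.eval 1 = 1) (hl0 : lam.coeff 0 = 0)
    (hld : 1 ≤ lam.natDegree) (hrd : 1 ≤ rho.natDegree) :
    (∀ a b : ℝ, 0 < a → a ≤ b → b ≤ 1 →
      (∫ x in a..b, nodeDist lam (Yfun rho x) * deriv (epsFun lam rho) x) =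
        trialEntropy lam rho (epsFun lam rho b) b (Yfun rho b) -
          trialEntropy lam rho (epsFun lam rho a) a (Yfun rho a)) ∧
    (∀ x ∈ Set.Ioc (0:ℝ) 1,
      HasDerivAt (fun t => trialEntropy lam rho (epsFun lam rho t) t (Yfun rho t))
        (nodeDist lam (Yfun rho x) * deriv (epsFun lam rho) x) x) :=
  ebp_trial_entropy_integral_general lam rho hlc hrc hr1 hld hrd
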